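/- Let κ be regular and let θ = 𝔫_κ^{2^κ}. Then θ is the unique cardinal μ ≥ κ with 𝔫_κ^μ = μ, and for every cardinal θ₁ ≥ θ one has 𝔫_κ^{θ₁} = θ. -/

import Mathlib

open Cardinal Set

universe u

/-- `ExtFn q p` : the partial function `q` extends `p`. -/
def ExtFn {θ : Type u} (q p : θ → Option Bool) : Prop :=
  ∀ x b, p x = some b → q x = some b

/-- `Fn κ θ` : partial functions `θ → 2` of size `< κ`. -/
def Fn (κ : Cardinal.{u}) (θ : Type u) : Set (θ → Option Bool) :=
  {p | #{x | p x ≠ none} < κ}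

/-- The basic open set determined by a condition `p`. -/
def cylinder {θ : Type u} (p : θ → Option Bool) : Set (θ → Bool) :=
  {f | ∀ x b, p x = some b → f x = b}

/-- The topology of the space `(2^θ)_κ`. -/
def kTop (κ : Cardinal.{u}) (θ : Type u) : TopologicalSpace (θ → Bool) :=
  TopologicalSpace.generateFrom {U | ∃ p ∈ Fn κ θ, U = cylinder p}

/-- The Baire number of the space `(2^θ)_κ` : the least cardinality of a family of
dense open sets with empty intersection. -/
noncomputable def spaceBaire (κ : Cardinal.{u}) (θ : Type u) : Cardinal.{u} :=
  sInf {c | ∃ F : Set (Set (θ → Bool)), #F = c ∧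
    (∀ U ∈ F, @IsOpen _ (kTop κ θ) U ∧ @Dense _ (kTop κ θ) U) ∧ ⋂₀ F = ∅}

/-- `𝔫_κ^θ` for cardinals `κ ≤ θ`. -/
noncomputable def nBaire (κ θ : Cardinal.{u}) : Cardinal.{u} :=
  spaceBaire κ θ.out

/-! For `μ ≥ κ` the number `𝔫_κ^μ` lies in `(κ, 2^κ]`: the space is `κ`-Baire because `κ` is
regular, and the `2^κ` sets `{f | f ↾ κ ≠ x}` are dense open with empty intersection. It is antitone
in `μ`, and `𝔫_κ^{𝔫_κ^μ} ≤ 𝔫_κ^μ`; these three facts alone force the fixed-point structure.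

For the last inequality, let `F` be a witness family on `μ` coordinates. If `2^ρ > κ` for some
`ρ < κ`, then `𝔫_κ^ν = κ⁺ < #F` for every `ν`. Otherwise there are only `κ` conditions with domain
in a set of size `κ`, so every `U ∈ F` has a set `S_U` of `κ` coordinates closed under extending
conditions into `U`. On the union `S` of the `S_U`, `#S ≤ #F`, the restrictions of the complements
`Uᶜ` are nowhere dense, so the complements of their closures witness `𝔫_κ^S ≤ #F`. -/

open Function TopologicalSpace

section Conditions

variable {κ : Cardinal.{u}} {T : Type u}

def dom (p : T → Option Bool) : Set T := {x | p x ≠ none}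

theorem mem_dom {p : T → Option Bool} {x : T} {b : Bool} (h : p x = some b) : x ∈ dom p := by
  simp [dom, h]

theorem cylinder_subset_cylinder {p q : T → Option Bool} (h : ExtFn q p) :
    cylinder q ⊆ cylinder p := fun _ hf x b hb => hf x b (h x b hb)

theorem ExtFn.trans {p q r : T → Option Bool} (hrq : ExtFn r q) (hqp : ExtFn q p) :
    ExtFn r p := fun x b hb => hrq x b (hqp x b hb)

theorem const_none_mem_Fn (hκ : ℵ₀ ≤ κ) : (fun _ => none : T → Option Bool) ∈ Fn κ T := by
  simpa [Fn] using aleph0_pos.trans_le hκ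

def totalExt (p : T → Option Bool) : T → Bool := fun x => (p x).getD false

theorem totalExt_mem_cylinder (p : T → Option Bool) : totalExt p ∈ cylinder p := by
  intro x b hb
  simp [totalExt, hb]

def mergeFn (p q : T → Option Bool) : T → Option Bool := fun x => (p x).or (q x)

theorem extFn_mergeFn_left (p q : T → Option Bool) : ExtFn (mergeFn p q) p := by
  intro x b hb
  simp [mergeFn, hb]

theorem extFn_mergeFn_right {p q : T → Option Bool}
    (hpq : ∀ x b c, p x = some b → q x = some c → b = c) : ExtFn (mergeFn p q) q := by
  intro x b hb
  rcases h : p x with _ | c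
  · simp [mergeFn, h, hb]
  · simp [mergeFn, h, hpq x c b h hb]

theorem extFn_mergeFn_right_of_mem {p q : T → Option Bool} {f : T → Bool}
    (hp : f ∈ cylinder p) (hq : f ∈ cylinder q) : ExtFn (mergeFn p q) q :=
  extFn_mergeFn_right fun x b c hb hc => (hp x b hb).symm.trans (hq x c hc)

theorem mem_cylinder_mergeFn {p q : T → Option Bool} {f : T → Bool} (hp : f ∈ cylinder p)
    (hq : f ∈ cylinder q) : f ∈ cylinder (mergeFn p q) := by
  intro x b hb
  rcases h : p x with _ | c
  · simp only [mergeFn, h, Option.none_or] at hb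
    exact hq x b hb
  · simp only [mergeFn, h, Option.some_or, Option.some.injEq] at hb
    exact hb ▸ hp x c h

theorem dom_mergeFn (p q : T → Option Bool) : dom (mergeFn p q) = dom p ∪ dom q := by
  ext x
  rcases h : p x with _ | c <;> simp [dom, mergeFn, h]

theorem mergeFn_mem_Fn (hκ : ℵ₀ ≤ κ) {p q : T → Option Bool} (hp : p ∈ Fn κ T)
    (hq : q ∈ Fn κ T) : mergeFn p q ∈ Fn κ T := by
  show #(dom (mergeFn p q)) < κ
  rw [dom_mergeFn]
  exact (mk_union_le _ _).trans_lt (add_lt_of_lt hκ hp hq)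

end Conditions

section Topology

variable {κ : Cardinal.{u}} {T : Type u}

theorem isOpen_cylinder {p : T → Option Bool} (hp : p ∈ Fn κ T) :
    @IsOpen _ (kTop κ T) (cylinder p) :=
  TopologicalSpace.GenerateOpen.basic _ ⟨p, hp, rfl⟩

theorem isTopologicalBasis_cylinders (hκ : ℵ₀ ≤ κ) :
    @IsTopologicalBasis _ (kTop κ T) {U | ∃ p ∈ Fn κ T, U = cylinder p} := by
  let := kTop κ T
  refine ⟨?_, ?_, rfl⟩
  · rintro _ ⟨p, hp, rfl⟩ _ ⟨q, hq, rfl⟩ f ⟨hfp, hfq⟩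
    refine ⟨_, ⟨mergeFn p q, mergeFn_mem_Fn hκ hp hq, rfl⟩, mem_cylinder_mergeFn hfp hfq, ?_⟩
    exact fun g hg => ⟨cylinder_subset_cylinder (extFn_mergeFn_left p q) hg,
      cylinder_subset_cylinder (extFn_mergeFn_right_of_mem hfp hfq) hg⟩
  · exact eq_univ_of_forall fun f =>
      ⟨_, ⟨_, const_none_mem_Fn hκ, rfl⟩, fun _ _ h => nomatch h⟩

theorem isOpen_kTop_iff (hκ : ℵ₀ ≤ κ) {U : Set (T → Bool)} :
    @IsOpen _ (kTop κ T) U ↔ ∀ f ∈ U, ∃ p ∈ Fn κ T, f ∈ cylinder p ∧ cylinder p ⊆ U := by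
  let := kTop κ T
  simp only [(isTopologicalBasis_cylinders hκ).isOpen_iff, mem_ofPred_eq]
  exact forall₂_congr fun f _ => ⟨fun ⟨_, ⟨p, hp, rfl⟩, h⟩ => ⟨p, hp, h⟩,
    fun ⟨p, hp, h⟩ => ⟨_, ⟨p, hp, rfl⟩, h⟩⟩

theorem dense_kTop_iff (hκ : ℵ₀ ≤ κ) {U : Set (T → Bool)} :
    @Dense _ (kTop κ T) U ↔ ∀ p ∈ Fn κ T, (cylinder p ∩ U).Nonempty := by
  let := kTop κ T
  simp only [(isTopologicalBasis_cylinders hκ).dense_iff, mem_ofPred_eq]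
  exact ⟨fun h p hp => h _ ⟨p, hp, rfl⟩ ⟨_, totalExt_mem_cylinder p⟩,
    fun h _ ⟨p, hp, hV⟩ _ => hV ▸ h p hp⟩

theorem exists_extFn_cylinder_subset (hκ : ℵ₀ ≤ κ) {U : Set (T → Bool)}
    (hUo : @IsOpen _ (kTop κ T) U) (hUd : @Dense _ (kTop κ T) U)
    {q : T → Option Bool} (hq : q ∈ Fn κ T) :
    ∃ p ∈ Fn κ T, ExtFn p q ∧ cylinder p ⊆ U := by
  obtain ⟨f, hfq, hfU⟩ := (dense_kTop_iff hκ).1 hUd q hq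
  obtain ⟨r, hr, hfr, hrU⟩ := (isOpen_kTop_iff hκ).1 hUo f hfU
  exact ⟨mergeFn r q, mergeFn_mem_Fn hκ hr hq, extFn_mergeFn_right_of_mem hfr hfq,
    (cylinder_subset_cylinder (extFn_mergeFn_left r q)).trans hrU⟩

theorem isNowhereDense_of_forall_exists_extFn (hκ : ℵ₀ ≤ κ) {A : Set (T → Bool)}
    (hA : ∀ p ∈ Fn κ T, ∃ r ∈ Fn κ T, ExtFn r p ∧ Disjoint (cylinder r) A) :
    @IsNowhereDense _ (kTop κ T) A := by
  let := kTop κ T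
  refine eq_empty_of_forall_notMem fun f hf => ?_
  obtain ⟨p, hp, hfp, hpA⟩ := (isOpen_kTop_iff hκ).1 isOpen_interior f hf
  obtain ⟨r, hr, hrp, hrA⟩ := hA p hp
  have hr_closure : Disjoint (cylinder r) (closure A) := hrA.closure_right (isOpen_cylinder hr)
  exact hr_closure.ne_of_mem (totalExt_mem_cylinder r)
    (interior_subset (hpA (cylinder_subset_cylinder hrp (totalExt_mem_cylinder r)))) rfl

end Topology

section Restriction

variable {κ : Cardinal.{u}} {R T : Type u}

theorem dom_extend_subset (e : R ↪ T) (p : R → Option Bool) :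
    dom (extend e p fun _ => none) ⊆ e '' dom p := fun y hy => by
  by_cases h : ∃ x, e x = y
  · obtain ⟨x, rfl⟩ := h
    exact ⟨x, by simpa [dom, e.injective.extend_apply] using hy, rfl⟩
  · exact absurd (extend_apply' _ _ _ h) hy

theorem extend_mem_Fn (e : R ↪ T) {p : R → Option Bool} (hp : p ∈ Fn κ R) :
    extend e p (fun _ => none) ∈ Fn κ T :=
  (mk_le_mk_of_subset (dom_extend_subset e p)).trans_lt (mk_image_le.trans_lt hp)

theorem comp_mem_Fn (e : R ↪ T) {q : T → Option Bool} (hq : q ∈ Fn κ T) : q ∘ e ∈ Fn κ R :=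
  (mk_preimage_of_injective e (dom q) e.injective).trans_lt hq

theorem preimage_comp_cylinder (e : R ↪ T) (p : R → Option Bool) :
    (· ∘ e) ⁻¹' cylinder p = cylinder (extend e p fun _ => none) := by
  ext f
  constructor
  · intro hf y b hb
    by_cases hy : ∃ x, e x = y
    · obtain ⟨x, rfl⟩ := hy
      rw [e.injective.extend_apply] at hb
      exact hf x b hb
    · rw [extend_apply' _ _ _ hy] at hb
      cases hb
  · intro hf x b hb
    exact hf (e x) b (by rw [e.injective.extend_apply]; exact hb)

theorem image_comp_cylinder (e : R ↪ T) (q : T → Option Bool) :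
    (· ∘ e) '' cylinder q = cylinder (q ∘ e) := by
  ext g
  constructor
  · rintro ⟨f, hf, rfl⟩ x b hb
    exact hf (e x) b hb
  · intro hg
    refine ⟨extend e g (totalExt q), fun y b hb => ?_, extend_comp e.injective _ _⟩
    by_cases hy : ∃ x, e x = y
    · obtain ⟨x, rfl⟩ := hy
      rw [e.injective.extend_apply]
      exact hg x b hb
    · rw [extend_apply' _ _ _ hy]
      exact totalExt_mem_cylinder q y b hb

theorem continuous_comp_embedding (e : R ↪ T) :
    @Continuous _ _ (kTop κ T) (kTop κ R) (· ∘ e) := by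
  let := kTop κ T
  refine continuous_generateFrom_iff.2 ?_
  rintro _ ⟨p, hp, rfl⟩
  rw [preimage_comp_cylinder]
  exact isOpen_cylinder (extend_mem_Fn e hp)

theorem isOpenMap_comp_embedding (hκ : ℵ₀ ≤ κ) (e : R ↪ T) :
    @IsOpenMap _ _ (kTop κ T) (kTop κ R) (· ∘ e) := by
  let := kTop κ T
  let := kTop κ R
  refine (isTopologicalBasis_cylinders hκ).isOpenMap_iff.2 ?_
  rintro _ ⟨q, hq, rfl⟩
  rw [image_comp_cylinder]
  exact isOpen_cylinder (comp_mem_Fn e hq)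

theorem isOpen_setOf_comp_eq (e : R ↪ T) (hR : #R < κ) (x : R → Bool) :
    @IsOpen _ (kTop κ T) {f | f ∘ e = x} := by
  have hx : cylinder (some ∘ x) = {x} := by
    ext g
    simp [cylinder, funext_iff]
  have hopen : @IsOpen _ (kTop κ R) {x} :=
    hx ▸ isOpen_cylinder ((mk_le_mk_of_subset (subset_univ _)).trans_lt (mk_univ.trans_lt hR))
  exact @Continuous.isOpen_preimage _ _ (kTop κ T) (kTop κ R) _ (continuous_comp_embedding e) _ hopen

theorem exists_mem_cylinder_comp_eq (p : T → Option Bool) (e : R ↪ T)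
    (he : ∀ r, p (e r) = none) (x : R → Bool) : ∃ f ∈ cylinder p, f ∘ e = x := by
  refine ⟨extend e x (totalExt p), fun y b hb => ?_, extend_comp e.injective x (totalExt p)⟩
  by_cases hy : ∃ r, e r = y
  · obtain ⟨r, rfl⟩ := hy
    simp [he r] at hb
  · rw [extend_apply' _ _ _ hy]
    exact totalExt_mem_cylinder p y b hb

end Restriction

section BaireFamily

variable {κ : Cardinal.{u}} {T : Type u}

def IsBaireFamily (κ : Cardinal.{u}) (F : Set (Set (T → Bool))) : Prop :=
  (∀ U ∈ F, @IsOpen _ (kTop κ T) U ∧ @Dense _ (kTop κ T) U) ∧ ⋂₀ F = ∅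

theorem spaceBaire_le_mk {F : Set (Set (T → Bool))} (hF : IsBaireFamily κ F) :
    spaceBaire κ T ≤ #F :=
  csInf_le' ⟨F, rfl, hF⟩

theorem isBaireFamily_range {ι : Type*} {D : ι → Set (T → Bool)}
    (hD : ∀ i, @IsOpen _ (kTop κ T) (D i) ∧ @Dense _ (kTop κ T) (D i)) (h : ⋂ i, D i = ∅) :
    IsBaireFamily κ (range D) :=
  ⟨forall_mem_range.2 hD, by rwa [sInter_range]⟩

theorem exists_block_forall_eq_none {p : T → Option Bool} (hp : p ∈ Fn κ T) {R S : Type u}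
    (hR : κ ≤ #R) (g : R → S → T) (hg : ∀ r r' s s', g r s = g r' s' → r = r') :
    ∃ r, ∀ s, p (g r s) = none := by
  by_contra! h
  choose s hs using h
  have hinj : Injective fun r => (⟨g r (s r), hs r⟩ : dom p) := fun r r' hrr' =>
    hg r r' _ _ (congrArg Subtype.val hrr')
  exact (hR.trans (mk_le_of_injective hinj)).not_gt hp

theorem isOpen_setOf_apply_eq (hκ : ℵ₀ ≤ κ) (y : T) (b : Bool) :
    @IsOpen _ (kTop κ T) {f | f y = b} := by
  have h := isOpen_setOf_comp_eq (κ := κ) (Embedding.punit y)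
    (by simpa using one_lt_aleph0.trans_le hκ) fun _ => b
  have hset : {f : T → Bool | f ∘ Embedding.punit y = fun _ => b} = {f | f y = b} := by
    ext f
    simp [funext_iff, Embedding.punit]
  rwa [hset] at h

theorem exists_isBaireFamily_mk_le_two_power (hκ : ℵ₀ ≤ κ) (hT : κ ≤ #T) :
    ∃ F : Set (Set (T → Bool)), IsBaireFamily κ F ∧ #F ≤ 2 ^ κ := by
  obtain ⟨e⟩ : Nonempty (κ.out ↪ T) := by rwa [← le_def, mk_out]
  let D : (κ.out → Bool) → Set (T → Bool) := fun x => {f | f ∘ e ≠ x}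
  have hD_eq : ∀ x, D x = ⋃ j, {f | f (e j) = !x j} := fun x => by
    ext f
    simp [D, funext_iff, Bool.eq_not_iff]
  have hD_open : ∀ x, @IsOpen _ (kTop κ T) (D x) := fun x => by
    let := kTop κ T
    exact hD_eq x ▸ isOpen_iUnion fun j => isOpen_setOf_apply_eq hκ _ _
  have hD_dense : ∀ x, @Dense _ (kTop κ T) (D x) := fun x => by
    refine (dense_kTop_iff hκ).2 fun p hp => ?_
    obtain ⟨j, hj⟩ := exists_block_forall_eq_none (S := PUnit) hp (mk_out κ).ge (fun j _ => e j)
      fun _ _ _ _ h => e.injective h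
    obtain ⟨f, hfp, hfj⟩ := exists_mem_cylinder_comp_eq p (Embedding.punit (e j)) (hj ·)
      fun _ => !x j
    refine ⟨f, hfp, hD_eq x ▸ mem_iUnion.2 ⟨j, congrFun hfj PUnit.unit⟩⟩
  have hD_inter : ⋂ x, D x = ∅ :=
    eq_empty_of_forall_notMem fun f hf => mem_iInter.1 hf (f ∘ e) rfl
  refine ⟨range D, isBaireFamily_range (fun x => ⟨hD_open x, hD_dense x⟩) hD_inter, ?_⟩
  simpa using mk_range_le (f := D)

theorem spaceBaire_le_two_power (hκ : ℵ₀ ≤ κ) (hT : κ ≤ #T) : spaceBaire κ T ≤ 2 ^ κ :=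
  let ⟨_, hF, hcard⟩ := exists_isBaireFamily_mk_le_two_power hκ hT
  (spaceBaire_le_mk hF).trans hcard

theorem exists_isBaireFamily_mk_eq_spaceBaire (hκ : ℵ₀ ≤ κ) (hT : κ ≤ #T) :
    ∃ F : Set (Set (T → Bool)), IsBaireFamily κ F ∧ #F = spaceBaire κ T := by
  obtain ⟨F, hF, -⟩ := exists_isBaireFamily_mk_le_two_power hκ hT
  obtain ⟨F', hcard, hF'⟩ := csInf_mem (s := {c | ∃ F : Set (Set (T → Bool)), #F = c ∧
    IsBaireFamily κ F}) ⟨_, F, rfl, hF⟩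
  exact ⟨F', hF', hcard⟩

end BaireFamily

section KappaBaire

variable {κ : Cardinal.{u}} {T : Type u}

open Classical in
noncomputable def chainSup {ι : Type*} (g : ι → T → Option Bool) : T → Option Bool :=
  fun x => if h : ∃ b, ∃ i, g i x = some b then some h.choose else none

theorem extFn_chainSup {ι : Type*} [LinearOrder ι] {g : ι → T → Option Bool}
    (hg : ∀ i j, i < j → ExtFn (g j) (g i)) (i : ι) : ExtFn (chainSup g) (g i) := by
  intro x b hb
  have h : ∃ b, ∃ i, g i x = some b := ⟨b, i, hb⟩
  obtain ⟨j, hj⟩ := h.choose_spec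
  have hchoose : h.choose = b := by
    rcases lt_trichotomy i j with hij | rfl | hji
    · exact Option.some.inj (hj.symm.trans (hg i j hij x b hb))
    · exact Option.some.inj (hj.symm.trans hb)
    · exact Option.some.inj ((hg j i hji x _ hj).symm.trans hb)
  simp [chainSup, h, hchoose]

theorem dom_chainSup_subset {ι : Type*} (g : ι → T → Option Bool) :
    dom (chainSup g) ⊆ ⋃ i, dom (g i) := by
  intro x hx
  by_cases h : ∃ b, ∃ i, g i x = some b
  · obtain ⟨b, i, hi⟩ := h
    exact mem_iUnion.2 ⟨i, mem_dom hi⟩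
  · exact absurd (dif_neg h) hx

open Classical in
noncomputable def denseExt (κ : Cardinal.{u}) (U : Set (T → Bool)) (q : T → Option Bool) :
    T → Option Bool :=
  if h : ∃ p ∈ Fn κ T, ExtFn p q ∧ cylinder p ⊆ U then h.choose else q

theorem denseExt_spec (hκ : ℵ₀ ≤ κ) {U : Set (T → Bool)}
    (hUo : @IsOpen _ (kTop κ T) U) (hUd : @Dense _ (kTop κ T) U)
    {q : T → Option Bool} (hq : q ∈ Fn κ T) :
    denseExt κ U q ∈ Fn κ T ∧ ExtFn (denseExt κ U q) q ∧ cylinder (denseExt κ U q) ⊆ U := by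
  have h := exists_extFn_cylinder_subset hκ hUo hUd hq
  rw [denseExt, dif_pos h]
  exact h.choose_spec

noncomputable def baireChain (κ : Cardinal.{u}) (D : κ.ord.ToType → Set (T → Bool)) :
    κ.ord.ToType → T → Option Bool :=
  wellFounded_lt.fix fun j g => denseExt κ (D j) (chainSup fun i : Iio j => g i i.2)

theorem baireChain_eq (D : κ.ord.ToType → Set (T → Bool)) (j : κ.ord.ToType) :
    baireChain κ D j = denseExt κ (D j) (chainSup fun i : Iio j => baireChain κ D i) := by
  rw [baireChain, WellFounded.fix_eq]

theorem baireChain_spec (hκ : κ.IsRegular) {D : κ.ord.ToType → Set (T → Bool)}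
    (hD : ∀ j, @IsOpen _ (kTop κ T) (D j) ∧ @Dense _ (kTop κ T) (D j)) (j : κ.ord.ToType) :
    baireChain κ D j ∈ Fn κ T ∧ (∀ i < j, ExtFn (baireChain κ D j) (baireChain κ D i)) ∧
      cylinder (baireChain κ D j) ⊆ D j := by
  induction j using WellFoundedLT.induction with
  | ind j IH =>
  let u := chainSup fun i : Iio j => baireChain κ D i
  have hu_ext : ∀ i : Iio j, ExtFn u (baireChain κ D i) :=
    extFn_chainSup fun i k hik => (IH k k.2).2.1 i hik
  have hu : u ∈ Fn κ T := by
    refine (mk_le_mk_of_subset (dom_chainSup_subset _)).trans_lt ?_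
    exact mk_iUnion_le_sum_mk.trans_lt <| sum_lt_of_isRegular hκ (by simpa using mk_Iio_lt j)
      fun i => (IH i i.2).1
  obtain ⟨hFn, hext, hsub⟩ := denseExt_spec hκ.aleph0_le (hD j).1 (hD j).2 hu
  rw [baireChain_eq]
  exact ⟨hFn, fun i hi => hext.trans (hu_ext ⟨i, hi⟩), hsub⟩

theorem iInter_nonempty_of_isRegular (hκ : κ.IsRegular) {D : κ.ord.ToType → Set (T → Bool)}
    (hD : ∀ j, @IsOpen _ (kTop κ T) (D j) ∧ @Dense _ (kTop κ T) (D j)) :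
    (⋂ j, D j).Nonempty := by
  have hspec := baireChain_spec hκ hD
  have hsup : ∀ j, ExtFn (chainSup (baireChain κ D)) (baireChain κ D j) :=
    extFn_chainSup fun i j hij => (hspec j).2.1 i hij
  exact ⟨_, mem_iInter.2 fun j => (hspec j).2.2 <|
    cylinder_subset_cylinder (hsup j) (totalExt_mem_cylinder _)⟩

theorem lt_mk_of_isBaireFamily (hκ : κ.IsRegular) {F : Set (Set (T → Bool))}
    (hF : IsBaireFamily κ F) : κ < #F := by
  by_contra! hle
  obtain ⟨hFD, hempty⟩ := hF
  rcases F.eq_empty_or_nonempty with rfl | hne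
  · simp at hempty
  have : Nonempty F := hne.to_subtype
  obtain ⟨e⟩ : Nonempty (F ↪ κ.ord.ToType) := by rwa [← le_def, mk_toType, card_ord]
  obtain ⟨f, hf⟩ := iInter_nonempty_of_isRegular hκ fun j => hFD _ (invFun e j).2
  have hfF : f ∈ ⋂₀ F := fun U hU => by
    obtain ⟨j, hj⟩ := invFun_surjective e.injective ⟨U, hU⟩
    simpa [hj] using mem_iInter.1 hf j
  rwa [hempty] at hfF

theorem lt_spaceBaire (hκ : κ.IsRegular) (hT : κ ≤ #T) : κ < spaceBaire κ T := by
  obtain ⟨F, hF, hcard⟩ := exists_isBaireFamily_mk_eq_spaceBaire hκ.aleph0_le hT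
  exact hcard ▸ lt_mk_of_isBaireFamily hκ hF

end KappaBaire

section Antitone

variable {κ : Cardinal.{u}} {T T' : Type u}

theorem isBaireFamily_image_preimage (hκ : ℵ₀ ≤ κ) (e : T ↪ T') {F : Set (Set (T → Bool))}
    (hF : IsBaireFamily κ F) : IsBaireFamily κ ((fun U => (· ∘ e) ⁻¹' U) '' F) := by
  refine ⟨forall_mem_image.2 fun U hU => ⟨?_, ?_⟩, ?_⟩
  · exact @Continuous.isOpen_preimage _ _ (kTop κ T') (kTop κ T) _
      (continuous_comp_embedding e) _ (hF.1 U hU).1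
  · exact @Dense.preimage _ _ (· ∘ e) (kTop κ T') (kTop κ T) _ (hF.1 U hU).2
      (isOpenMap_comp_embedding hκ e)
  · rw [sInter_image, ← preimage_sInter, hF.2, preimage_empty]

theorem spaceBaire_le_mk_of_embedding (hκ : ℵ₀ ≤ κ) (e : T ↪ T') {F : Set (Set (T → Bool))}
    (hF : IsBaireFamily κ F) : spaceBaire κ T' ≤ #F :=
  (spaceBaire_le_mk (isBaireFamily_image_preimage hκ e hF)).trans mk_image_le

theorem spaceBaire_anti (hκ : ℵ₀ ≤ κ) (hT : κ ≤ #T) (hTT' : #T ≤ #T') :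
    spaceBaire κ T' ≤ spaceBaire κ T := by
  obtain ⟨e⟩ := le_def _ _ |>.1 hTT'
  obtain ⟨F, hF, hcard⟩ := exists_isBaireFamily_mk_eq_spaceBaire hκ hT
  exact hcard ▸ spaceBaire_le_mk_of_embedding hκ e hF

end Antitone

section SmallPowerSet

variable {κ : Cardinal.{u}} {T : Type u}

/-- A point shows at most `κ` of the `c > κ` patterns on its `κ` blocks. -/
theorem spaceBaire_le_of_le_two_power (hκ : ℵ₀ ≤ κ) {ρ c : Cardinal.{u}} (hρ : ρ < κ)
    (hκc : κ < c) (hc : c ≤ 2 ^ ρ) (hT : κ ≤ #T) : spaceBaire κ T ≤ c := by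
  obtain ⟨e⟩ : Nonempty (κ.out × ρ.out ↪ T) := by
    rw [← le_def, mk_prod, lift_id, lift_id, mk_out, mk_out]
    exact (mul_le_mul' le_rfl hρ.le).trans ((mul_eq_self hκ).trans_le hT)
  obtain ⟨code⟩ : Nonempty (c.out ↪ (ρ.out → Bool)) := by
    rwa [← le_def, mk_out, mk_arrow, mk_out, mk_bool, lift_two, lift_id']
  let block : κ.out → ρ.out ↪ T := fun γ => (Embedding.sectR γ _).trans e
  let D : c.out → Set (T → Bool) := fun i => ⋃ γ, {f | f ∘ block γ = code i}
  have hD_open : ∀ i, @IsOpen _ (kTop κ T) (D i) := fun i => by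
    let := kTop κ T
    exact isOpen_iUnion fun γ => isOpen_setOf_comp_eq (block γ) (by rwa [mk_out]) _
  have hD_dense : ∀ i, @Dense _ (kTop κ T) (D i) := fun i => by
    refine (dense_kTop_iff hκ).2 fun p hp => ?_
    obtain ⟨γ, hγ⟩ := exists_block_forall_eq_none hp (mk_out κ).ge (fun γ m => e (γ, m))
      fun _ _ _ _ h => (Prod.ext_iff.1 (e.injective h)).1
    obtain ⟨f, hfp, hf⟩ := exists_mem_cylinder_comp_eq p (block γ) hγ (code i)
    exact ⟨f, hfp, mem_iUnion.2 ⟨γ, hf⟩⟩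
  have hD_inter : ⋂ i, D i = ∅ := by
    refine eq_empty_of_forall_notMem fun f hf => ?_
    choose γ hγ using fun i => mem_iUnion.1 (mem_iInter.1 hf i)
    have hinj : Injective γ := fun i j hij =>
      code.injective ((hγ i).symm.trans (hij ▸ hγ j))
    exact (mk_le_of_injective hinj).not_gt (by rwa [mk_out, mk_out])
  calc spaceBaire κ T ≤ #(range D) :=
        spaceBaire_le_mk (isBaireFamily_range (fun i => ⟨hD_open i, hD_dense i⟩) hD_inter)
    _ ≤ #c.out := mk_range_le
    _ = c := mk_out c

end SmallPowerSet

section Reflection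

variable {κ : Cardinal.{u}} {T : Type u}

theorem exists_forall_lt_of_mk_lt (hκ : κ.IsRegular) {s : Set κ.ord.ToType} (hs : #s < κ) :
    ∃ j, ∀ i ∈ s, i < j :=
  not_isCofinal_iff.1 fun h => (Order.cof_le h).not_gt (by rwa [Ordinal.cof_toType, hκ.cof_ord])

theorem mk_subtype_mk_lt_le (hκ : κ.IsRegular) (h2 : ∀ ρ < κ, 2 ^ ρ ≤ κ) {X : Type u}
    (hX : #X ≤ κ) : #{s : Set X // #s < κ} ≤ κ := by
  obtain ⟨e⟩ : Nonempty (X ↪ κ.ord.ToType) := by rwa [← le_def, mk_toType, card_ord]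
  have hsub : range (Subtype.val : {s : Set X // #s < κ} → Set X) ⊆
      ⋃ j : κ.ord.ToType, 𝒫 (e ⁻¹' Iio j) := by
    rintro _ ⟨⟨s, hs⟩, rfl⟩
    obtain ⟨j, hj⟩ := exists_forall_lt_of_mk_lt hκ (mk_image_le.trans_lt hs : #(e '' s) < κ)
    exact mem_iUnion.2 ⟨j, fun x hx => hj _ (mem_image_of_mem e hx)⟩
  have hpow : ∀ j : κ.ord.ToType, #(𝒫 (e ⁻¹' Iio j)) ≤ κ := fun j => by
    rw [mk_powerset]
    exact h2 _ ((mk_preimage_of_injective _ _ e.injective).trans_lt (by simpa using mk_Iio_lt j))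
  calc #{s : Set X // #s < κ} = #(range (Subtype.val : {s : Set X // #s < κ} → Set X)) :=
        (mk_range_eq _ Subtype.val_injective).symm
    _ ≤ #(⋃ j : κ.ord.ToType, 𝒫 (e ⁻¹' Iio j)) := mk_le_mk_of_subset hsub
    _ ≤ #κ.ord.ToType * ⨆ j : κ.ord.ToType, #(𝒫 (e ⁻¹' Iio j)) := mk_iUnion_le _
    _ ≤ κ * κ := mul_le_mul' (by rw [mk_toType, card_ord]) (ciSup_le' hpow)
    _ = κ := mul_eq_self hκ.aleph0_le

/-- Conditions with domain inside `B` are coded by their graphs, small subsets of `B × Bool`. -/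
theorem mk_condition_dom_subset_le (hκ : κ.IsRegular) (h2 : ∀ ρ < κ, 2 ^ ρ ≤ κ) {B : Set T}
    (hB : #B ≤ κ) : #{q : T → Option Bool // q ∈ Fn κ T ∧ dom q ⊆ B} ≤ κ := by
  have hgraph : ∀ q ∈ Fn κ T, #{y : B × Bool | q y.1 = some y.2} < κ := fun q hq => by
    refine lt_of_le_of_lt (mk_le_of_injective (f := fun y => (⟨y.1.1.1, mem_dom y.2⟩ : dom q))
      fun y y' h => ?_) hq
    simp only [Subtype.mk.injEq] at h
    have h1 : y.1.1 = y'.1.1 := Subtype.ext h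
    have h2 : some y.1.2 = some y'.1.2 := y.2.symm.trans (h1 ▸ y'.2)
    exact Subtype.ext (Prod.ext h1 (Option.some.inj h2))
  let graph : {q : T → Option Bool // q ∈ Fn κ T ∧ dom q ⊆ B} → {s : Set (B × Bool) // #s < κ} :=
    fun q => ⟨{y | q.1 y.1 = some y.2}, hgraph q.1 q.2.1⟩
  have hinj : Injective graph := by
    rintro ⟨q, _, hqB⟩ ⟨q', _, hq'B⟩ h
    have hset : ∀ y : B × Bool, q y.1 = some y.2 ↔ q' y.1 = some y.2 := fun y =>
      Set.ext_iff.1 (congrArg Subtype.val h) y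
    refine Subtype.ext (funext fun x => Option.ext fun b => ⟨fun hb => ?_, fun hb => ?_⟩)
    · exact (hset (⟨x, hqB (mem_dom hb)⟩, b)).1 hb
    · exact (hset (⟨x, hq'B (mem_dom hb)⟩, b)).2 hb
  refine (mk_le_of_injective hinj).trans (mk_subtype_mk_lt_le hκ h2 ?_)
  rw [mk_prod, lift_uzero, mk_bool, lift_two]
  exact (mul_le_mul' hB ((natCast_lt_aleph0 (n := 2)).le.trans hκ.aleph0_le)).trans
    (mul_eq_self hκ.aleph0_le).le

def IsReflecting (κ : Cardinal.{u}) (U : Set (T → Bool)) (S : Set T) : Prop :=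
  ∀ q ∈ Fn κ T, dom q ⊆ S → ∃ p ∈ Fn κ T, dom p ⊆ S ∧ ExtFn p q ∧ cylinder p ⊆ U

def closureStep (κ : Cardinal.{u}) (U : Set (T → Bool)) (B : Set T) : Set T :=
  B ∪ ⋃ q : {q : T → Option Bool // q ∈ Fn κ T ∧ dom q ⊆ B}, dom (denseExt κ U q.1)

theorem mk_closureStep_le (hκ : κ.IsRegular) (h2 : ∀ ρ < κ, 2 ^ ρ ≤ κ) {U : Set (T → Bool)}
    (hUo : @IsOpen _ (kTop κ T) U) (hUd : @Dense _ (kTop κ T) U) {B : Set T} (hB : #B ≤ κ) :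
    #(closureStep κ U B) ≤ κ := by
  refine (mk_union_le _ _).trans ((add_le_add hB ?_).trans (add_eq_self hκ.aleph0_le).le)
  refine (mk_iUnion_le _).trans ((mul_le_mul' (mk_condition_dom_subset_le hκ h2 hB)
    (ciSup_le' fun q => ?_)).trans (mul_eq_self hκ.aleph0_le).le)
  exact (denseExt_spec hκ.aleph0_le hUo hUd q.2.1).1.le

noncomputable def closureChain (κ : Cardinal.{u}) (U : Set (T → Bool)) :
    κ.ord.ToType → Set T :=
  wellFounded_lt.fix fun j S => closureStep κ U (⋃ i : Iio j, S i i.2)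

theorem closureChain_eq (U : Set (T → Bool)) (j : κ.ord.ToType) :
    closureChain κ U j = closureStep κ U (⋃ i : Iio j, closureChain κ U i) := by
  rw [closureChain, WellFounded.fix_eq]

theorem mk_closureChain_le (hκ : κ.IsRegular) (h2 : ∀ ρ < κ, 2 ^ ρ ≤ κ) {U : Set (T → Bool)}
    (hUo : @IsOpen _ (kTop κ T) U) (hUd : @Dense _ (kTop κ T) U) (j : κ.ord.ToType) :
    #(closureChain κ U j) ≤ κ := by
  induction j using WellFoundedLT.induction with
  | ind j IH =>
  rw [closureChain_eq]
  refine mk_closureStep_le hκ h2 hUo hUd ((mk_iUnion_le _).trans ?_)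
  have hj : #(Iio j) < κ := by simpa using mk_Iio_lt j
  exact (mul_le_mul' hj.le (ciSup_le' fun i : Iio j => IH i.1 i.2)).trans
    (mul_eq_self hκ.aleph0_le).le

theorem exists_isReflecting (hκ : κ.IsRegular) (h2 : ∀ ρ < κ, 2 ^ ρ ≤ κ)
    {U : Set (T → Bool)} (hUo : @IsOpen _ (kTop κ T) U) (hUd : @Dense _ (kTop κ T) U) :
    ∃ S : Set T, #S ≤ κ ∧ IsReflecting κ U S := by
  refine ⟨⋃ j, closureChain κ U j, ?_, fun q hq hqS => ?_⟩
  · exact (mk_iUnion_le _).trans ((mul_le_mul' (by rw [mk_toType, card_ord])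
      (ciSup_le' (mk_closureChain_le hκ h2 hUo hUd))).trans (mul_eq_self hκ.aleph0_le).le)
  choose j hj using fun x : dom q => mem_iUnion.1 (hqS x.2)
  obtain ⟨k, hk⟩ := exists_forall_lt_of_mk_lt hκ (mk_range_le.trans_lt hq)
  have hqk : dom q ⊆ ⋃ i : Iio k, closureChain κ U i := fun x hx =>
    mem_iUnion.2 ⟨⟨j ⟨x, hx⟩, hk _ (mem_range_self _)⟩, hj _⟩
  obtain ⟨hFn, hext, hsub⟩ := denseExt_spec hκ.aleph0_le hUo hUd hq
  refine ⟨denseExt κ U q, hFn, fun x hx => mem_iUnion.2 ⟨k, ?_⟩, hext, hsub⟩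
  rw [closureChain_eq]
  exact Or.inr (mem_iUnion.2 ⟨⟨q, hq, hqk⟩, hx⟩)

end Reflection

section Transfer

variable {κ : Cardinal.{u}} {T T' : Type u}

theorem isNowhereDense_image_compl (hκ : ℵ₀ ≤ κ) {U : Set (T → Bool)} {S₀ S : Set T}
    (hS₀ : IsReflecting κ U S₀) (hS : S₀ ⊆ S) :
    @IsNowhereDense _ (kTop κ S) ((· ∘ Subtype.val) '' Uᶜ) := by
  refine isNowhereDense_of_forall_exists_extFn hκ fun p hp => ?_
  let q : T → Option Bool :=
    extend (Embedding.subtype (· ∈ S₀)) (p ∘ embeddingOfSubset S₀ S hS) fun _ => none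
  have hq_apply : ∀ x : S, x.1 ∈ S₀ → q x = p x := fun x hx =>
    (Embedding.subtype (· ∈ S₀)).injective.extend_apply _ _ ⟨x.1, hx⟩
  have hqS₀ : dom q ⊆ S₀ := fun y hy => by
    obtain ⟨x, -, rfl⟩ := dom_extend_subset _ _ hy
    exact x.2
  obtain ⟨p', hp', hp'S₀, hp'q, hp'U⟩ :=
    hS₀ q (extend_mem_Fn _ (comp_mem_Fn _ hp)) hqS₀
  refine ⟨mergeFn (p' ∘ Subtype.val) p,
    mergeFn_mem_Fn hκ (comp_mem_Fn (Embedding.subtype (· ∈ S)) hp') hp,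
    extFn_mergeFn_right fun x b c hb hc => ?_, ?_⟩
  · have hx : x.1 ∈ S₀ := hp'S₀ (mem_dom hb)
    exact Option.some.inj (hb.symm.trans (hp'q x c ((hq_apply x hx).trans hc)))
  · refine disjoint_left.2 ?_
    rintro g hg ⟨f, hfU, rfl⟩
    refine hfU (hp'U fun y b hb => ?_)
    have hy : y ∈ S := hS (hp'S₀ (mem_dom hb))
    exact hg ⟨y, hy⟩ b (extFn_mergeFn_left _ p ⟨y, hy⟩ b hb)

theorem isBaireFamily_range_compl_closure {X : Type*} {π : X → T → Bool}
    (hπ : Surjective π) {ι : Type*} {U : ι → Set X} (hU : ⋂ i, U i = ∅)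
    (hnd : ∀ i, @IsNowhereDense _ (kTop κ T) (π '' (U i)ᶜ)) :
    IsBaireFamily κ (range fun i => (@closure _ (kTop κ T) (π '' (U i)ᶜ))ᶜ) := by
  let := kTop κ T
  refine isBaireFamily_range
    (fun i => isClosed_isNowhereDense_iff_compl.1 ⟨isClosed_closure, (hnd i).closure⟩) ?_
  refine eq_empty_of_forall_notMem fun y hy => ?_
  obtain ⟨x, rfl⟩ := hπ y
  obtain ⟨i, hi⟩ : ∃ i, x ∉ U i := by
    simpa using (hU ▸ notMem_empty x : x ∉ ⋂ i, U i)
  exact mem_iInter.1 hy i (subset_closure ⟨x, hi, rfl⟩)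

theorem spaceBaire_le_mk_of_two_power_le (hκ : κ.IsRegular) (h2 : ∀ ρ < κ, 2 ^ ρ ≤ κ)
    {F : Set (Set (T → Bool))} (hF : IsBaireFamily κ F) (hFT' : #F ≤ #T') :
    spaceBaire κ T' ≤ #F := by
  choose S hS_card hS using fun U : F => exists_isReflecting hκ h2 (hF.1 U U.2).1 (hF.1 U U.2).2
  let S' := ⋃ U, S U
  have hκF := lt_mk_of_isBaireFamily hκ hF
  have hS'F : #S' ≤ #F := (mk_iUnion_le _).trans ((mul_le_mul' le_rfl
    (ciSup_le' fun U => (hS_card U).trans hκF.le)).trans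
      (mul_eq_self (hκ.aleph0_le.trans hκF.le)).le)
  obtain ⟨e⟩ := le_def _ _ |>.1 (hS'F.trans hFT')
  have hF' := isBaireFamily_range_compl_closure (κ := κ)
    (Subtype.val_injective.surjective_comp_right : Surjective fun f : T → Bool => f ∘ Subtype.val)
    (U := fun U : F => U.1) (by rw [← sInter_eq_iInter]; exact hF.2)
    fun U => isNowhereDense_image_compl hκ.aleph0_le (hS U) (subset_iUnion S U)
  exact (spaceBaire_le_mk_of_embedding hκ.aleph0_le e hF').trans mk_range_le

theorem spaceBaire_le_mk_of_isBaireFamily (hκ : κ.IsRegular) {F : Set (Set (T → Bool))}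
    (hF : IsBaireFamily κ F) (hFT' : #F ≤ #T') : spaceBaire κ T' ≤ #F := by
  have hκF := lt_mk_of_isBaireFamily hκ hF
  by_cases h2 : ∀ ρ < κ, 2 ^ ρ ≤ κ
  · exact spaceBaire_le_mk_of_two_power_le hκ h2 hF hFT'
  push Not at h2
  obtain ⟨ρ, hρ, hκρ⟩ := h2
  exact (spaceBaire_le_of_le_two_power hκ.aleph0_le hρ (Order.lt_succ κ)
    (Order.succ_le_of_lt hκρ) (hκF.le.trans hFT')).trans (Order.succ_le_of_lt hκF)

end Transfer

theorem AntitoneOn.isFixedPt_apply_unique {α : Type*} [PartialOrder α] {f : α → α} {a b : α}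
    (hf : AntitoneOn f (Ici a)) (hmaps : MapsTo f (Ici a) (Icc a b))
    (hff : ∀ x ∈ Ici a, f (f x) ≤ f x) (hab : a ≤ b) :
    IsFixedPt f (f b) ∧ (∀ μ, a ≤ μ → IsFixedPt f μ → μ = f b) ∧
      ∀ t, f b ≤ t → f t = f b := by
  have hfb := hmaps (mem_Ici.2 hab)
  have hfix : IsFixedPt f (f b) := le_antisymm (hff b hab) (hf hfb.1 hab hfb.2)
  refine ⟨hfix, fun μ hμ hμfix => ?_, fun t ht => ?_⟩
  · have hfbμ : f b ≤ μ := hμfix ▸ hf hμ hab (hμfix ▸ (hmaps hμ).2)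
    refine le_antisymm ?_ hfbμ
    calc μ = f μ := hμfix.symm
      _ ≤ f (f b) := hf hfb.1 hμ hfbμ
      _ = f b := hfix
  · have hat : a ≤ t := hfb.1.trans ht
    have hft := hmaps hat
    refine le_antisymm ?_ ?_
    · exact hfix ▸ hf hfb.1 hat ht
    · calc f b ≤ f (f t) := hf hft.1 hab hft.2
        _ ≤ f t := hff t hat

theorem nBaire_nBaire_le {κ μ : Cardinal.{u}} (hκ : κ.IsRegular) (hμ : κ ≤ μ) :
    nBaire κ (nBaire κ μ) ≤ nBaire κ μ := by
  obtain ⟨F, hF, hcard⟩ :=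
    exists_isBaireFamily_mk_eq_spaceBaire (T := μ.out) hκ.aleph0_le (by rwa [mk_out])
  rw [nBaire, nBaire, ← hcard]
  exact spaceBaire_le_mk_of_isBaireFamily hκ hF (mk_out _).ge

/-- Fact 5: `θ = 𝔫_κ^{2^κ}` is the unique cardinal `μ ≥ κ` with `𝔫_κ^μ = μ`, and
`𝔫_κ^{θ₁} = θ` for every `θ₁ ≥ θ`. -/
theorem baire_unique_fixed_point (κ : Cardinal.{u}) (hκ : κ.IsRegular) :
    nBaire κ (nBaire κ ((2 : Cardinal.{u}) ^ κ)) = nBaire κ ((2 : Cardinal.{u}) ^ κ) ∧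
    (∀ μ : Cardinal.{u}, κ ≤ μ → nBaire κ μ = μ → μ = nBaire κ ((2 : Cardinal.{u}) ^ κ)) ∧
    (∀ θ₁ : Cardinal.{u}, nBaire κ ((2 : Cardinal.{u}) ^ κ) ≤ θ₁ →
      nBaire κ θ₁ = nBaire κ ((2 : Cardinal.{u}) ^ κ)) := by
  have hanti : AntitoneOn (nBaire κ) (Ici κ) := fun μ hμ ν _ hμν =>
    spaceBaire_anti hκ.aleph0_le (by rwa [mk_out]) (by rwa [mk_out, mk_out])
  have hmaps : MapsTo (nBaire κ) (Ici κ) (Icc κ (2 ^ κ)) := fun μ hμ =>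
    ⟨(lt_spaceBaire hκ (by rwa [mk_out])).le,
      spaceBaire_le_two_power hκ.aleph0_le (by rwa [mk_out])⟩
  exact hanti.isFixedPt_apply_unique hmaps (fun μ hμ => nBaire_nBaire_le hκ hμ) (cantor κ).le
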